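/- Let ⊙ be a non-degenerate pseudo-multiplication on [0,∞] and let τ be a σ-maxitive measure on a measurable space (E, 𝔅) having the Radon–Nikodym property with respect to the idempotent ⊙-integral. Then τ is semi-⊙-finite: for every measurable B, τ(B) = ⨆{τ(A) : A measurable, A ⊆ B, τ(A) ⊙-finite}. -/

import Mathlib

open scoped ENNReal
open Set

/-- A pseudo-multiplication on `[0,∞]`: associative, monotone in each argument,
continuous on `(0,∞) × [0,∞]`, with `s ↦ s ⊙ t` continuous on `(0,∞]`,
admitting a left identity, without zero divisors, and with `0` as annihilator. -/
structure PseudoMul where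
  op : ℝ≥0∞ → ℝ≥0∞ → ℝ≥0∞
  assoc : ∀ a b c, op (op a b) c = op a (op b c)
  mono_left : ∀ t, Monotone fun s => op s t
  mono_right : ∀ s, Monotone fun t => op s t
  continuousOn : ContinuousOn (fun p : ℝ≥0∞ × ℝ≥0∞ => op p.1 p.2) (Ioo 0 ⊤ ×ˢ univ)
  continuousOn_left : ∀ t, ContinuousOn (fun s => op s t) (Ioi 0)
  one : ℝ≥0∞
  one_op : ∀ t, op one t = t
  no_zero_divisors : ∀ s t, op s t = 0 → s = 0 ∨ t = 0
  zero_op : ∀ t, op 0 t = 0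
  op_zero : ∀ t, op t 0 = 0

/-- An element `t` is `⊙`-finite if `⨅_{s>0} s ⊙ t = 0`. -/
def PseudoMul.OFinite (P : PseudoMul) (t : ℝ≥0∞) : Prop :=
  ⨅ s ∈ Ioi (0 : ℝ≥0∞), P.op s t = 0

/-- `⊙` is non-degenerate if its left identity is `⊙`-finite. -/
def PseudoMul.Nondegenerate (P : PseudoMul) : Prop :=
  P.OFinite P.one

/-- A σ-maxitive measure: vanishes on `∅` and turns countable unions of
measurable sets into suprema. -/
def SigmaMaxitive {E : Type*} [MeasurableSpace E] (ν : Set E → ℝ≥0∞) : Prop :=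
  ν ∅ = 0 ∧ ∀ B : ℕ → Set E, (∀ n, MeasurableSet (B n)) →
    ν (⋃ n, B n) = ⨆ n, ν (B n)

/-- The idempotent `⊙`-integral `∫_B f ⊙ dν = ⨆_{t ∈ [0,∞)} t ⊙ ν(B ∩ {f > t})`. -/
noncomputable def idemInt {E : Type*} [MeasurableSpace E] (P : PseudoMul) (ν : Set E → ℝ≥0∞)
    (f : E → ℝ≥0∞) (B : Set E) : ℝ≥0∞ :=
  ⨆ t ∈ Iio (⊤ : ℝ≥0∞), P.op t (ν (B ∩ {x | t < f x}))

/-- `ν ≪⊙ τ`: `ν(B) ≤ ∞ ⊙ τ(B)` whenever `τ(B)` is `⊙`-finite. -/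
def OAbsCont {E : Type*} [MeasurableSpace E] (P : PseudoMul)
    (ν τ : Set E → ℝ≥0∞) : Prop :=
  ∀ B : Set E, MeasurableSet B → P.OFinite (τ B) → ν B ≤ P.op ⊤ (τ B)

/-- `τ` is σ-`⊙`-finite. -/
def SigmaOFinite {E : Type*} [MeasurableSpace E] (P : PseudoMul)
    (τ : Set E → ℝ≥0∞) : Prop :=
  ∃ B : ℕ → Set E, (∀ n, MeasurableSet (B n)) ∧ (⋃ n, B n) = univ ∧
    ∀ n, P.OFinite (τ (B n))

/-- A σ-ideal of the σ-algebra: a nonempty collection of measurable sets closed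
under countable unions and under measurable subsets. -/
def IsSigmaIdeal {E : Type*} [MeasurableSpace E] (I : Set (Set E)) : Prop :=
  I.Nonempty ∧ (∀ A ∈ I, MeasurableSet A) ∧
    (∀ B : ℕ → Set E, (∀ n, B n ∈ I) → (⋃ n, B n) ∈ I) ∧
    (∀ A B : Set E, B ∈ I → A ⊆ B → MeasurableSet A → A ∈ I)

/-- `τ` is σ-principal. -/
def SigmaPrincipal {E : Type*} [MeasurableSpace E] (τ : Set E → ℝ≥0∞) : Prop :=
  ∀ I : Set (Set E), IsSigmaIdeal I → ∃ L ∈ I, ∀ S ∈ I, τ (S \ L) = 0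

/-- `τ` has the Radon–Nikodym property w.r.t. the idempotent `⊙`-integral. -/
def HasRNP {E : Type*} [MeasurableSpace E] (P : PseudoMul)
    (τ : Set E → ℝ≥0∞) : Prop :=
  ∀ ν : Set E → ℝ≥0∞, SigmaMaxitive ν → OAbsCont P ν τ →
    ∃ c : E → ℝ≥0∞, Measurable c ∧
      ∀ B : Set E, MeasurableSet B → ν B = idemInt P τ c B
/-
Let `m` be the supremum of `τ(A)` over the measurable `A ⊆ B` with `τ(A)`
`⊙`-finite, and let `ν(S) = 1⊙` if `τ(S ∩ B) > m` and `ν(S) = 0` otherwise. This `ν` is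
σ-maxitive, and `ν ≪⊙ τ` because it vanishes wherever `τ` is `⊙`-finite; let `c` be its
density. On `B ∩ {c = 0}` the integral vanishes, so `τ ≤ m` there. On `W = B ∩ {c > t}`
with `0 < t < ∞` we get `t ⊙ τ(W) ≤ ν(W) ∈ {0, 1⊙}`, which is `⊙`-finite by
non-degeneracy; hence `τ(W)` is `⊙`-finite and again `τ(W) ≤ m`. These sets cover `B`.
-/

namespace PseudoMul

variable (P : PseudoMul)

theorem one_ne_zero : P.one ≠ 0 := by
  intro h
  have h_top := P.one_op ⊤
  rw [h, P.zero_op] at h_top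
  exact ENNReal.top_ne_zero h_top.symm

theorem oFinite_zero : P.OFinite 0 :=
  le_antisymm (iInf₂_le_of_le 1 (mem_Ioi.mpr zero_lt_one) (P.op_zero 1).le) bot_le

variable {P}

theorem OFinite.mono {u v : ℝ≥0∞} (hv : P.OFinite v) (huv : u ≤ v) : P.OFinite u :=
  le_antisymm ((iInf₂_mono fun s _ => P.mono_right s huv).trans hv.le) bot_le

/-- Uses that `s ⊙ t > 0` for `s, t > 0`, so that `s ⊙ (t ⊙ u) = (s ⊙ t) ⊙ u` ranges over
a subfamily of `(r ⊙ u)_{r > 0}`. -/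
theorem OFinite.of_op {t u : ℝ≥0∞} (ht : t ≠ 0) (h : P.OFinite (P.op t u)) : P.OFinite u := by
  refine le_antisymm (le_trans ?_ h.le) bot_le
  refine le_iInf₂ fun s hs => ?_
  rw [← P.assoc]
  refine iInf₂_le (P.op s t) (pos_iff_ne_zero.mpr fun h0 => ?_)
  rcases P.no_zero_divisors s t h0 with hs0 | ht0
  · exact (ne_of_gt hs) hs0
  · exact ht ht0

theorem Nondegenerate.oFinite_indicator (hP : P.Nondegenerate) (s : Set ℝ≥0∞) (x : ℝ≥0∞) :
    P.OFinite (s.indicator (fun _ => P.one) x) := by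
  by_cases hx : x ∈ s
  · rwa [indicator_of_mem hx]
  · rw [indicator_of_notMem hx]
    exact P.oFinite_zero

end PseudoMul

namespace SigmaMaxitive

variable {E : Type*} [MeasurableSpace E] {τ : Set E → ℝ≥0∞}

theorem union (hτ : SigmaMaxitive τ) {A C : Set E} (hA : MeasurableSet A)
    (hC : MeasurableSet C) : τ (A ∪ C) = max (τ A) (τ C) := by
  let u : ℕ → Set E := fun n => if n = 0 then A else C
  have h := hτ.2 u fun n => by dsimp only [u]; split_ifs <;> assumption
  rw [← union_iUnion_nat_succ, ← sup_iSup_nat_succ] at h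
  simpa [u, iUnion_const] using h

theorem mono (hτ : SigmaMaxitive τ) {A C : Set E} (hA : MeasurableSet A)
    (hC : MeasurableSet C) (hAC : A ⊆ C) : τ A ≤ τ C := by
  rw [← union_eq_right.mpr hAC, hτ.union hA hC]
  exact le_max_left _ _

theorem inter_right (hτ : SigmaMaxitive τ) {B : Set E} (hB : MeasurableSet B) :
    SigmaMaxitive fun S => τ (S ∩ B) := by
  refine ⟨by simp only [empty_inter, hτ.1], fun S hS => ?_⟩
  simp only [iUnion_inter]
  exact hτ.2 _ fun n => (hS n).inter hB

theorem indicator_Ioi (hτ : SigmaMaxitive τ) (m a : ℝ≥0∞) :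
    SigmaMaxitive fun S => (Ioi m).indicator (fun _ => a) (τ S) := by
  refine ⟨by simp [hτ.1], fun S hS => ?_⟩
  simp only [hτ.2 S hS, indicator_apply, mem_Ioi]
  by_cases h : m < ⨆ n, τ (S n)
  · obtain ⟨n, hn⟩ := lt_iSup_iff.mp h
    refine (if_pos h).trans (le_antisymm (le_iSup_of_le n (if_pos hn).ge) (iSup_le fun k => ?_))
    split_ifs <;> simp
  · rw [if_neg h, eq_comm, ENNReal.iSup_eq_zero]
    exact fun n => if_neg fun hn => h (hn.trans_le (le_iSup (fun k => τ (S k)) n))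

end SigmaMaxitive

section idemInt

variable {E : Type*} [MeasurableSpace E] (P : PseudoMul) {ν : Set E → ℝ≥0∞}
  {c : E → ℝ≥0∞} {S : Set E}

theorem op_le_idemInt {t : ℝ≥0∞} (ht : t < ⊤) (hS : S ⊆ {x | t < c x}) :
    P.op t (ν S) ≤ idemInt P ν c S :=
  le_iSup₂_of_le (f := fun t _ => P.op t (ν (S ∩ {x | t < c x}))) t ht
    (by rw [inter_eq_left.mpr hS])

theorem idemInt_eq_zero (hν : ν ∅ = 0) (hS : S ⊆ {x | c x = 0}) : idemInt P ν c S = 0 := by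
  refine le_antisymm (iSup₂_le fun t _ => ?_) bot_le
  have hempty : S ∩ {x | t < c x} = ∅ :=
    eq_empty_of_forall_notMem fun x hx => by simp [show c x = 0 from hS hx.1] at hx
  rw [hempty, hν, P.op_zero]

end idemInt

theorem eq_zero_union_iUnion_inv_two_pow_lt {E : Type*} (c : E → ℝ≥0∞) :
    {x | c x = 0} ∪ ⋃ n : ℕ, {x | 2⁻¹ ^ n < c x} = univ := by
  refine eq_univ_of_forall fun x => ?_
  by_cases hx : c x = 0
  · exact Or.inl hx
  · obtain ⟨n, hn⟩ := ENNReal.exists_inv_two_pow_lt hx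
    exact Or.inr (mem_iUnion.mpr ⟨n, hn⟩)

theorem oAbsCont_indicator_Ioi {E : Type*} [MeasurableSpace E] {P : PseudoMul}
    {τ : Set E → ℝ≥0∞} (hτ : SigmaMaxitive τ) {B : Set E} (hB : MeasurableSet B) {m : ℝ≥0∞}
    (hm : ∀ A, MeasurableSet A → A ⊆ B → P.OFinite (τ A) → τ A ≤ m) (a : ℝ≥0∞) :
    OAbsCont P (fun S => (Ioi m).indicator (fun _ => a) (τ (S ∩ B))) τ := by
  intro S hS hfin
  have hSB : τ (S ∩ B) ≤ m := hm _ (hS.inter hB) inter_subset_right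
    (hfin.mono (hτ.mono (hS.inter hB) hS inter_subset_left))
  exact (indicator_of_notMem (not_lt.mpr hSB) _).le.trans bot_le

/-- A σ-maxitive measure with the Radon–Nikodym property is semi-`⊙`-finite. -/
theorem semiOFinite_of_rnp {E : Type*} [MeasurableSpace E]
    (P : PseudoMul) (hP : P.Nondegenerate)
    (τ : Set E → ℝ≥0∞) (hτ : SigmaMaxitive τ) (hRNP : HasRNP P τ) :
    ∀ B : Set E, MeasurableSet B →
      τ B = ⨆ A ∈ {A : Set E | MeasurableSet A ∧ A ⊆ B ∧ P.OFinite (τ A)},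
        τ A := by
  intro B hB
  set m := ⨆ A ∈ {A : Set E | MeasurableSet A ∧ A ⊆ B ∧ P.OFinite (τ A)}, τ A
  have le_m : ∀ A, MeasurableSet A → A ⊆ B → P.OFinite (τ A) → τ A ≤ m :=
    fun A hA hAB hfin => le_iSup₂_of_le (f := fun A _ => τ A) A ⟨hA, hAB, hfin⟩ le_rfl
  refine le_antisymm ?_ (iSup₂_le fun A hA => hτ.mono hA.1 hB hA.2.1)
  let ν : Set E → ℝ≥0∞ := fun S => (Ioi m).indicator (fun _ => P.one) (τ (S ∩ B))
  obtain ⟨c, hc, hνc⟩ := hRNP ν ((hτ.inter_right hB).indicator_Ioi m P.one)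
    (oAbsCont_indicator_Ioi hτ hB le_m P.one)
  have hZ : MeasurableSet (B ∩ {x | c x = 0}) := hB.inter (hc (measurableSet_singleton 0))
  have hW (t : ℝ≥0∞) : MeasurableSet (B ∩ {x | t < c x}) := hB.inter (hc measurableSet_Ioi)
  have zero_part : τ (B ∩ {x | c x = 0}) ≤ m := by
    have hν := (hνc _ hZ).trans (idemInt_eq_zero P hτ.1 inter_subset_right)
    simpa [ν, inter_eq_left.mpr inter_subset_left, P.one_ne_zero] using hν
  have pos_part (t : ℝ≥0∞) (ht0 : t ≠ 0) (htop : t ≠ ⊤) : τ (B ∩ {x | t < c x}) ≤ m := by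
    have hop : P.op t (τ (B ∩ {x | t < c x})) ≤ ν (B ∩ {x | t < c x}) :=
      (op_le_idemInt P htop.lt_top inter_subset_right).trans_eq (hνc _ (hW t)).symm
    exact le_m _ (hW t) inter_subset_left (((hP.oFinite_indicator _ _).mono hop).of_op ht0)
  calc τ B = max (τ (B ∩ {x | c x = 0})) (⨆ n : ℕ, τ (B ∩ {x | 2⁻¹ ^ n < c x})) := by
        rw [← hτ.2 _ fun n => hW _, ← hτ.union hZ (.iUnion fun n => hW _), ← inter_iUnion,
          ← inter_union_distrib_left, eq_zero_union_iUnion_inv_two_pow_lt, inter_univ]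
    _ ≤ m := max_le zero_part (iSup_le fun n =>
      pos_part _ (pow_ne_zero _ (by norm_num)) (ENNReal.pow_ne_top (by norm_num)))
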